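/- Define v(h; t) = 0 for h ≥ 0, v(h; t) = -(t/2) h² for h ∈ [-2/t, 0), and v(h; t) = 2(1/t + h) for h < -2/t, where t > 0. Then h ↦ v(h; t) is 2-Lipschitz on ℝ, and if H ~ N(0,1) then E[v(H; t)] = -t/4 + (t/2) ∫_{2/t}^∞ (x - 2/t)² φ(x) dx, which lies in [-1, 0]. -/
import Mathlib


open Real Set MeasureTheory

open Filter

/-- standard normal density -/
noncomputable def stdPDF (x : ℝ) : ℝ := Real.exp (-x ^ 2 / 2) / Real.sqrt (2 * Real.pi)

/-- The piecewise function v(h; t). -/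
noncomputable def vfun (t h : ℝ) : ℝ :=
  if 0 ≤ h then 0
  else if -2 / t ≤ h then -(t / 2) * h ^ 2
  else 2 * (1 / t + h)

lemma stdPDF_nonneg (x : ℝ) : 0 ≤ stdPDF x := by
  unfold stdPDF; positivity

lemma stdPDF_even (x : ℝ) : stdPDF (-x) = stdPDF x := by
  unfold stdPDF; rw [neg_pow]; norm_num

lemma continuous_stdPDF : Continuous stdPDF := by
  unfold stdPDF
  fun_prop

lemma stdPDF_hasDerivAt (x : ℝ) : HasDerivAt stdPDF (-x * stdPDF x) x := by
  unfold stdPDF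
  have h : HasDerivAt (fun x : ℝ => Real.exp (-x ^ 2 / 2)) (-x * Real.exp (-x ^ 2 / 2)) x := by
    have h1 : HasDerivAt (fun x : ℝ => -x ^ 2 / 2) (-x) x := by
      have := ((hasDerivAt_pow 2 x).neg).div_const 2
      simpa using this.congr_deriv (by ring)
    simpa using (h1.exp.congr_deriv (by ring))
  have := h.div_const (Real.sqrt (2 * Real.pi))
  refine this.congr_deriv ?_
  simp [Real.sqrt_mul_self]; ring

lemma stdPDF_rw : stdPDF = fun x => Real.exp (-(2⁻¹ : ℝ) * x ^ 2) * (Real.sqrt (2 * Real.pi))⁻¹ := by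
  funext x; unfold stdPDF; rw [div_eq_mul_inv]; ring_nf

lemma integrable_stdPDF : Integrable stdPDF := by
  rw [stdPDF_rw]
  exact (integrable_exp_neg_mul_sq (by norm_num)).mul_const _

lemma sq_exp_bound (x : ℝ) : x ^ 2 * Real.exp (-(2⁻¹:ℝ) * x ^ 2) ≤ 4 * Real.exp (-(4⁻¹:ℝ) * x ^ 2) := by
  have h1 : Real.exp (-(2⁻¹:ℝ) * x ^ 2) = Real.exp (-(4⁻¹:ℝ) * x ^ 2) * Real.exp (-(4⁻¹:ℝ) * x ^ 2) := by
    rw [← Real.exp_add]; ring_nf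
  have h2 : x ^ 2 * Real.exp (-(4⁻¹:ℝ) * x ^ 2) ≤ 4 := by
    have h3 := Real.add_one_le_exp (4⁻¹ * x ^ 2)
    have h4 : Real.exp (-(4⁻¹:ℝ) * x ^ 2) = (Real.exp (4⁻¹ * x ^ 2))⁻¹ := by
      rw [← Real.exp_neg]; ring_nf
    rw [h4]
    rw [mul_inv_le_iff₀ (Real.exp_pos _)]
    nlinarith [Real.exp_pos (4⁻¹ * x ^ 2)]
  calc x ^ 2 * Real.exp (-(2⁻¹:ℝ) * x ^ 2)
      = (x ^ 2 * Real.exp (-(4⁻¹:ℝ) * x ^ 2)) * Real.exp (-(4⁻¹:ℝ) * x ^ 2) := by rw [h1]; ring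
    _ ≤ 4 * Real.exp (-(4⁻¹:ℝ) * x ^ 2) := by
        exact mul_le_mul_of_nonneg_right h2 (Real.exp_pos _).le

lemma integrable_sq_stdPDF : Integrable (fun x => x ^ 2 * stdPDF x) := by
  rw [stdPDF_rw]
  have : Integrable (fun x : ℝ => x ^ 2 * Real.exp (-(2⁻¹:ℝ) * x ^ 2)) := by
    apply Integrable.mono' (((integrable_exp_neg_mul_sq (show (0:ℝ) < 4⁻¹ by norm_num)).const_mul 4))
    · exact ((continuous_pow 2).mul (Continuous.rexp (by continuity))).aestronglyMeasurable
    · refine Filter.Eventually.of_forall fun x => ?_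
      rw [Real.norm_eq_abs, abs_of_nonneg (by positivity)]
      exact sq_exp_bound x
  simpa [mul_assoc] using this.mul_const (Real.sqrt (2 * Real.pi))⁻¹

lemma integrable_mul_stdPDF : Integrable (fun x => x * stdPDF x) := by
  rw [stdPDF_rw]
  simpa [mul_assoc] using (integrable_mul_exp_neg_mul_sq (show (0:ℝ) < 2⁻¹ by norm_num)).mul_const (Real.sqrt (2 * Real.pi))⁻¹

lemma integrable_abs_mul_stdPDF : Integrable (fun x => |x| * stdPDF x) := by
  have := integrable_mul_stdPDF.abs
  refine this.congr (Filter.Eventually.of_forall fun x => ?_)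
  simp only [abs_mul, abs_of_nonneg (stdPDF_nonneg x)]

lemma tendsto_stdPDF : Tendsto stdPDF atTop (nhds 0) := by
  rw [stdPDF_rw]
  have h : Tendsto (fun x : ℝ => -(2⁻¹:ℝ) * x ^ 2) atTop atBot := by
    apply Filter.Tendsto.const_mul_atTop_of_neg (by norm_num)
    exact tendsto_pow_atTop (by norm_num)
  simpa using (Real.tendsto_exp_atBot.comp h).mul_const (Real.sqrt (2 * Real.pi))⁻¹

lemma tendsto_mul_stdPDF : Tendsto (fun x => x * stdPDF x) atTop (nhds 0) := by
  have hb : Tendsto (fun x : ℝ => (Real.sqrt (2 * Real.pi))⁻¹ * (x * Real.exp (-x))) atTop (nhds 0) := by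
    simpa using (tendsto_pow_mul_exp_neg_atTop_nhds_zero 1).const_mul (Real.sqrt (2 * Real.pi))⁻¹
  apply tendsto_of_tendsto_of_tendsto_of_le_of_le' tendsto_const_nhds hb
  · filter_upwards [eventually_ge_atTop (0:ℝ)] with x hx
    exact mul_nonneg hx (stdPDF_nonneg x)
  · filter_upwards [eventually_ge_atTop (2:ℝ)] with x hx
    unfold stdPDF
    rw [div_eq_mul_inv]
    have h1 : Real.exp (-x ^ 2 / 2) ≤ Real.exp (-x) := by
      apply Real.exp_le_exp.2; nlinarith
    have h2 : (0:ℝ) < (Real.sqrt (2 * Real.pi)) := Real.sqrt_pos.2 (by positivity)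
    have h3 : (Real.sqrt (2 * Real.pi))⁻¹ ≤ 1 := by
      rw [inv_le_one_iff₀]; right
      rw [show (1:ℝ) = Real.sqrt 1 by simp]
      apply Real.sqrt_le_sqrt; nlinarith [Real.pi_gt_three]
    calc x * (Real.exp (-x ^ 2 / 2) * (Real.sqrt (2 * Real.pi))⁻¹)
        ≤ x * (Real.exp (-x) * (Real.sqrt (2 * Real.pi))⁻¹) := by
          apply mul_le_mul_of_nonneg_left _ (by linarith)
          exact mul_le_mul_of_nonneg_right h1 (by positivity)
      _ = (Real.sqrt (2 * Real.pi))⁻¹ * (x * Real.exp (-x)) := by ring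

lemma L1 (c : ℝ) : ∫ x in Ioi c, x * stdPDF x = stdPDF c := by
  have hderiv : ∀ x ∈ Ici c, HasDerivAt (fun x => -stdPDF x) (x * stdPDF x) x := by
    intro x _
    have h := (stdPDF_hasDerivAt x).neg
    have e : -(-x * stdPDF x) = x * stdPDF x := by ring
    rw [e] at h
    exact h
  have hint : IntegrableOn (fun x : ℝ => x * stdPDF x) (Ioi c) :=
    integrable_mul_stdPDF.integrableOn
  have htend : Tendsto (fun x => -stdPDF x) atTop (nhds 0) := by
    simpa using tendsto_stdPDF.neg
  have := integral_Ioi_of_hasDerivAt_of_tendsto' hderiv hint htend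
  simpa using this

lemma L2 (c : ℝ) : ∫ x in Ioi c, x ^ 2 * stdPDF x = (∫ x in Ioi c, stdPDF x) + c * stdPDF c := by
  have key : ∫ x in Ioi c, (x ^ 2 * stdPDF x - stdPDF x) = c * stdPDF c := by
    have hderiv : ∀ x ∈ Ici c, HasDerivAt (fun x => -(x * stdPDF x)) (x ^ 2 * stdPDF x - stdPDF x) x := by
      intro x _
      have h := ((hasDerivAt_id x).mul (stdPDF_hasDerivAt x)).neg
      have e : -(1 * stdPDF x + id x * (-x * stdPDF x)) = x ^ 2 * stdPDF x - stdPDF x := by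
        simp only [id]; ring
      rw [e] at h
      exact h
    have hint : IntegrableOn (fun x : ℝ => x ^ 2 * stdPDF x - stdPDF x) (Ioi c) :=
      (integrable_sq_stdPDF.sub integrable_stdPDF).integrableOn
    have htend : Tendsto (fun x => -(x * stdPDF x)) atTop (nhds 0) := by
      simpa using tendsto_mul_stdPDF.neg
    have := integral_Ioi_of_hasDerivAt_of_tendsto' hderiv hint htend
    simpa using this
  have h2 := integral_sub (integrable_sq_stdPDF.integrableOn (s := Ioi c))
    (integrable_stdPDF.integrableOn (s := Ioi c))
  rw [key] at h2
  linarith [h2]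

lemma L3 : ∫ x in Ioi (0:ℝ), stdPDF x = 1 / 2 := by
  rw [stdPDF_rw]
  rw [integral_mul_const, integral_gaussian_Ioi]
  rw [show Real.pi / 2⁻¹ = 2 * Real.pi by ring]
  rw [div_mul_eq_mul_div, mul_inv_cancel₀ (by positivity)]

lemma E0 (c : ℝ) : ∫ x in Iic c, stdPDF x = ∫ x in Ioi (-c), stdPDF x := by
  rw [← integral_comp_neg_Iic c stdPDF]
  exact setIntegral_congr_fun measurableSet_Iic fun x _ => (stdPDF_even x).symm

lemma E1 (c : ℝ) : ∫ x in Iic c, x * stdPDF x = -∫ x in Ioi (-c), x * stdPDF x := by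
  calc ∫ x in Iic c, x * stdPDF x
      = ∫ x in Iic c, (fun y => -(y * stdPDF y)) (-x) := by
        refine setIntegral_congr_fun measurableSet_Iic fun x _ => ?_
        simp only [stdPDF_even]; ring
    _ = ∫ x in Ioi (-c), -(x * stdPDF x) := by
        simpa using integral_comp_neg_Iic c (fun y => -(y * stdPDF y))
    _ = -∫ x in Ioi (-c), x * stdPDF x := integral_neg _

lemma E2 (c : ℝ) : ∫ x in Iic c, x ^ 2 * stdPDF x = ∫ x in Ioi (-c), x ^ 2 * stdPDF x := by
  rw [← integral_comp_neg_Iic c (fun x => x ^ 2 * stdPDF x)]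
  refine setIntegral_congr_fun measurableSet_Iic fun x _ => ?_
  simp [stdPDF_even, neg_pow]

lemma vfun_eq1 (t h : ℝ) (hh : 0 ≤ h) : vfun t h = 0 := if_pos hh

lemma vfun_eq2 (t h : ℝ) (hh : h < 0) (ha : -2 / t ≤ h) : vfun t h = -(t / 2) * h ^ 2 := by
  rw [vfun, if_neg (not_le.2 hh), if_pos ha]

lemma vfun_eq3 (t h : ℝ) (ht : 0 < t) (ha : h < -2 / t) : vfun t h = 2 * (1 / t + h) := by
  have h2t : (0:ℝ) < 2 / t := by positivity
  have hnd : -2 / t = -(2 / t) := neg_div t 2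
  rw [vfun, if_neg (by push_neg; linarith), if_neg (not_le.2 ha)]

lemma vfun_key (t : ℝ) (ht : 0 < t) (x y : ℝ) (hxy : x ≤ y) :
    |vfun t x - vfun t y| ≤ 2 * (y - x) := by
  have htt : t * (2 / t) = 2 := by field_simp
  have ht1 : t * (1 / t) = 1 := by field_simp
  have h2t : (0:ℝ) < 2 / t := by positivity
  have h1t : (0:ℝ) < 1 / t := by positivity
  rcases le_or_gt 0 x with hx0 | hx0
  · have hy0 : 0 ≤ y := le_trans hx0 hxy
    rw [vfun_eq1 t x hx0, vfun_eq1 t y hy0]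
    simp; linarith
  · rcases le_or_gt (-2 / t) x with hxa | hxa
    · have htx : -2 ≤ t * x := by
        rw [neg_div] at hxa
        nlinarith [mul_le_mul_of_nonneg_left hxa ht.le]
      rw [vfun_eq2 t x hx0 hxa]
      rcases le_or_gt 0 y with hy0 | hy0
      · rw [vfun_eq1 t y hy0, abs_le]
        constructor <;>
          nlinarith [mul_nonneg (by linarith : (0:ℝ) ≤ t * x + 2) (by linarith : (0:ℝ) ≤ -x)]
      · have hya : -2 / t ≤ y := le_trans hxa hxy
        have hty : -2 ≤ t * y := by nlinarith [mul_le_mul_of_nonneg_left hxy ht.le]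
        rw [vfun_eq2 t y hy0 hya, abs_le]
        constructor <;>
          nlinarith [mul_nonneg (by linarith : (0:ℝ) ≤ y - x) (by linarith : (0:ℝ) ≤ 4 + t * (x + y)),
            mul_nonneg ht.le (mul_nonneg (by linarith : (0:ℝ) ≤ y - x) (by linarith : (0:ℝ) ≤ -(x + y))),
            mul_le_mul_of_nonneg_left hxy ht.le]
    · have htx : t * x < -2 := by
        rw [neg_div] at hxa
        nlinarith [mul_lt_mul_of_pos_left hxa ht]
      rw [vfun_eq3 t x ht hxa]
      rcases le_or_gt 0 y with hy0 | hy0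
      · rw [vfun_eq1 t y hy0, abs_le]
        constructor <;> nlinarith
      · rcases le_or_gt (-2 / t) y with hya | hya
        · have hty : -2 ≤ t * y := by
            rw [neg_div] at hya
            nlinarith [mul_le_mul_of_nonneg_left hya ht.le]
          rw [vfun_eq2 t y hy0 hya, abs_le]
          constructor <;>
            nlinarith [mul_nonneg ht.le (sq_nonneg (y + 2 / t)), sq_nonneg (t * y + 2),
              mul_pos ht (mul_pos h1t h1t), mul_pos h1t h1t,
              mul_le_mul_of_nonneg_left hty (le_of_lt h1t)]
        · rw [vfun_eq3 t y ht hya, abs_le]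
          constructor <;> nlinarith

lemma vfun_lipschitz (t : ℝ) (ht : 0 < t) : LipschitzWith 2 (vfun t) := by
  apply LipschitzWith.of_dist_le_mul
  intro x y
  simp only [Real.dist_eq, NNReal.coe_ofNat]
  rcases le_total x y with h | h
  · have e : |x - y| = y - x := by rw [abs_of_nonpos (by linarith)]; ring
    rw [e]
    exact vfun_key t ht x y h
  · have e : |x - y| = x - y := abs_of_nonneg (by linarith)
    rw [e, abs_sub_comm]
    exact vfun_key t ht y x h

lemma vfun_abs_le (t : ℝ) (ht : 0 < t) (h : ℝ) : |vfun t h| ≤ 2 * |h| := by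
  rcases le_total h 0 with hh | hh
  · have := vfun_key t ht h 0 hh
    rw [vfun_eq1 t 0 le_rfl, sub_zero] at this
    rw [abs_of_nonpos hh]
    linarith
  · rw [vfun_eq1 t h hh]
    simp [abs_of_nonneg hh]
    positivity

lemma vfun_cont (t : ℝ) (ht : 0 < t) : Continuous (vfun t) :=
  (vfun_lipschitz t ht).continuous

lemma vfun_nonpos (t : ℝ) (ht : 0 < t) (h : ℝ) : vfun t h ≤ 0 := by
  rcases le_or_gt 0 h with hh | hh
  · rw [vfun_eq1 t h hh]
  · rcases le_or_gt (-2 / t) h with ha | ha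
    · rw [vfun_eq2 t h hh ha]; nlinarith
    · rw [vfun_eq3 t h ht ha]
      have h2t : (0:ℝ) < 2 / t := by positivity
      have hnd : -2 / t = -(2 / t) := neg_div t 2
      have : 1 / t ≤ 2 / t - 1/t := by rw [div_sub_div_same]; norm_num
      nlinarith [ha]

lemma vfun_ge (t : ℝ) (ht : 0 < t) (h : ℝ) : 2 * min h 0 ≤ vfun t h := by
  rcases le_or_gt 0 h with hh | hh
  · rw [vfun_eq1 t h hh, min_eq_right hh]
    linarith
  · rw [min_eq_left hh.le]
    rcases le_or_gt (-2 / t) h with ha | ha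
    · rw [vfun_eq2 t h hh ha]
      have htt : t * (2 / t) = 2 := by field_simp
      have htx : -2 ≤ t * h := by
        rw [neg_div] at ha
        nlinarith [mul_le_mul_of_nonneg_left ha ht.le]
      nlinarith [mul_nonneg (by linarith : (0:ℝ) ≤ t * h + 2) (by linarith : (0:ℝ) ≤ -h)]
    · rw [vfun_eq3 t h ht ha]
      have h1t : (0:ℝ) < 1 / t := by positivity
      linarith

theorem vfun_lipschitz_and_mean (t : ℝ) (ht : 0 < t) :
    LipschitzWith 2 (vfun t) ∧
    (∫ h : ℝ, vfun t h * stdPDF h)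
      = -t / 4 + t / 2 * ∫ x in Set.Ioi (2 / t), (x - 2 / t) ^ 2 * stdPDF x ∧
    (∫ h : ℝ, vfun t h * stdPDF h) ∈ Set.Icc (-1 : ℝ) 0 := by
  have ha : (0:ℝ) < 2 / t := by positivity
  have hnd : (-2 : ℝ) / t = -(2 / t) := neg_div t 2
  set a : ℝ := 2 / t with ha_def
  set A : ℝ := ∫ x in Ioi a, stdPDF x with hA_def
  set p : ℝ := stdPDF a with hp_def
  -- integrability of the full integrand
  have hInt : Integrable (fun h => vfun t h * stdPDF h) := by
    apply Integrable.mono' ((integrable_abs_mul_stdPDF.const_mul 2))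
    · exact ((vfun_cont t ht).mul continuous_stdPDF).aestronglyMeasurable
    · refine Filter.Eventually.of_forall fun x => ?_
      rw [Real.norm_eq_abs, abs_mul, abs_of_nonneg (stdPDF_nonneg x), ← mul_assoc]
      exact mul_le_mul_of_nonneg_right (vfun_abs_le t ht x) (stdPDF_nonneg x)
  -- piece over Ioi 0 is zero
  have hIoi0 : ∫ h in Ioi (0:ℝ), vfun t h * stdPDF h = 0 := by
    rw [setIntegral_congr_fun measurableSet_Ioi
      (g := fun _ => (0:ℝ)) (fun x hx => by rw [vfun_eq1 t x (le_of_lt hx), zero_mul])]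
    simp
  -- split whole line
  have hsplit1 : (∫ h : ℝ, vfun t h * stdPDF h)
      = ∫ h in Iic (0:ℝ), vfun t h * stdPDF h := by
    rw [← intervalIntegral.integral_Iic_add_Ioi hInt.integrableOn hInt.integrableOn, hIoi0, add_zero]
  -- split Iic 0 at -a
  have hsplit2 : (∫ h in Iic (0:ℝ), vfun t h * stdPDF h)
      = (∫ h in Iic (-a), vfun t h * stdPDF h) + ∫ h in Ioc (-a) (0:ℝ), vfun t h * stdPDF h := by
    rw [← setIntegral_union (Iic_disjoint_Ioc le_rfl) measurableSet_Ioc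
      hInt.integrableOn hInt.integrableOn, Iic_union_Ioc_eq_Iic (by linarith)]
  -- left piece
  have hP1 : (∫ h in Iic (-a), vfun t h * stdPDF h)
      = ∫ h in Iic (-a), (a * stdPDF h + 2 * (h * stdPDF h)) := by
    refine setIntegral_congr_fun measurableSet_Iic fun h hh => ?_
    simp only [mem_Iic] at hh
    rcases lt_or_eq_of_le hh with hlt | heq
    · rw [vfun_eq3 t h ht (by rw [hnd]; exact hlt)]
      rw [ha_def]; field_simp
    · rw [heq, vfun_eq2 t (-a) (by linarith) (by rw [hnd])]
      rw [ha_def]; field_simp; ring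
  have hP1val : (∫ h in Iic (-a), (a * stdPDF h + 2 * (h * stdPDF h))) = a * A - 2 * p := by
    rw [integral_add ((integrable_stdPDF.const_mul a).integrableOn)
      ((integrable_mul_stdPDF.const_mul 2).integrableOn)]
    rw [integral_const_mul, integral_const_mul]
    rw [E0, E1, neg_neg, L1]
    ring
  -- middle piece
  have hP2 : (∫ h in Ioc (-a) (0:ℝ), vfun t h * stdPDF h)
      = ∫ h in Ioc (-a) (0:ℝ), (-(t/2)) * (h ^ 2 * stdPDF h) := by
    refine setIntegral_congr_fun measurableSet_Ioc fun h hh => ?_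
    obtain ⟨h1, h2⟩ := hh
    rcases lt_or_eq_of_le h2 with hlt | heq
    · rw [vfun_eq2 t h hlt (by rw [hnd]; linarith)]; ring
    · rw [heq, vfun_eq1 t 0 le_rfl]; ring
  have hIic0sq : (∫ h in Iic (0:ℝ), h ^ 2 * stdPDF h) = 1/2 := by
    rw [E2, neg_zero, L2, L3]
    simp
  have hIicasq : (∫ h in Iic (-a), h ^ 2 * stdPDF h) = A + a * p := by
    rw [E2, neg_neg, L2]
  have hmid : (∫ h in Ioc (-a) (0:ℝ), h ^ 2 * stdPDF h) = 1/2 - (A + a * p) := by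
    have := setIntegral_union (f := fun h : ℝ => h ^ 2 * stdPDF h) (μ := volume)
      (s := Iic (-a)) (t := Ioc (-a) (0:ℝ))
      (Iic_disjoint_Ioc (le_refl (-a))) measurableSet_Ioc
      integrable_sq_stdPDF.integrableOn integrable_sq_stdPDF.integrableOn
    rw [Iic_union_Ioc_eq_Iic (by linarith : -a ≤ 0)] at this
    rw [hIic0sq, hIicasq] at this
    linarith
  have hP2val : (∫ h in Ioc (-a) (0:ℝ), (-(t/2)) * (h ^ 2 * stdPDF h))
      = -(t/2) * (1/2 - (A + a * p)) := by
    rw [integral_const_mul, hmid]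
  -- right-hand side inner integral
  have hRHS : (∫ x in Ioi a, (x - a) ^ 2 * stdPDF x)
      = (A + a * p) - 2 * a * p + a ^ 2 * A := by
    have hexp : ∀ x : ℝ, (x - a) ^ 2 * stdPDF x
        = (x ^ 2 * stdPDF x - 2 * a * (x * stdPDF x)) + a ^ 2 * stdPDF x := by
      intro x; ring
    have i1 : IntegrableOn (fun x : ℝ => x ^ 2 * stdPDF x - 2 * a * (x * stdPDF x)) (Ioi a) :=
      (integrable_sq_stdPDF.sub (integrable_mul_stdPDF.const_mul (2*a))).integrableOn
    have i2 : IntegrableOn (fun x : ℝ => a ^ 2 * stdPDF x) (Ioi a) :=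
      (integrable_stdPDF.const_mul (a^2)).integrableOn
    have i3 : IntegrableOn (fun x : ℝ => x ^ 2 * stdPDF x) (Ioi a) :=
      integrable_sq_stdPDF.integrableOn
    have i4 : IntegrableOn (fun x : ℝ => 2 * a * (x * stdPDF x)) (Ioi a) :=
      (integrable_mul_stdPDF.const_mul (2*a)).integrableOn
    rw [setIntegral_congr_fun measurableSet_Ioi (fun x _ => hexp x)]
    rw [integral_add i1 i2, integral_sub i3 i4, integral_const_mul, integral_const_mul, L1, L2]
  -- total value
  have hval : (∫ h : ℝ, vfun t h * stdPDF h) = a * A - 2 * p + (-(t/2)) * (1/2 - (A + a * p)) := by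
    rw [hsplit1, hsplit2, hP1, hP1val, hP2, hP2val]
  have htt : t * a = 2 := by rw [ha_def]; field_simp
  refine ⟨vfun_lipschitz t ht, ?_, ?_⟩
  · rw [hval, hRHS]
    linear_combination (p - a * A / 2) * htt
  · constructor
    · -- lower bound
      have hmin_int : Integrable (fun h : ℝ => min h 0 * stdPDF h) := by
        apply Integrable.mono' integrable_abs_mul_stdPDF
        · exact ((continuous_id.min continuous_const).mul continuous_stdPDF).aestronglyMeasurable
        · refine Filter.Eventually.of_forall fun x => ?_
          rw [Real.norm_eq_abs, abs_mul, abs_of_nonneg (stdPDF_nonneg x)]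
          apply mul_le_mul_of_nonneg_right _ (stdPDF_nonneg x)
          rcases le_total x 0 with hx | hx
          · rw [min_eq_left hx]
          · rw [min_eq_right hx]; simp [abs_nonneg]
      have hg_int : Integrable (fun h : ℝ => 2 * (min h 0 * stdPDF h)) := hmin_int.const_mul 2
      have hmono : ∀ h : ℝ, 2 * (min h 0 * stdPDF h) ≤ vfun t h * stdPDF h := by
        intro h
        rw [← mul_assoc]
        exact mul_le_mul_of_nonneg_right (vfun_ge t ht h) (stdPDF_nonneg h)
      have hcmp := integral_mono hg_int hInt hmono
      have hgval : (∫ h : ℝ, 2 * (min h 0 * stdPDF h)) = -2 * stdPDF 0 := by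
        rw [integral_const_mul]
        have hIoi : (∫ h in Ioi (0:ℝ), min h 0 * stdPDF h) = 0 := by
          rw [setIntegral_congr_fun measurableSet_Ioi
            (g := fun _ => (0:ℝ)) (fun x hx => by rw [min_eq_right (le_of_lt hx), zero_mul])]
          simp
        have hIic : (∫ h in Iic (0:ℝ), min h 0 * stdPDF h) = ∫ h in Iic (0:ℝ), h * stdPDF h :=
          setIntegral_congr_fun measurableSet_Iic (fun x hx => by rw [min_eq_left hx])
        have hs : (∫ h : ℝ, min h 0 * stdPDF h) = ∫ h in Iic (0:ℝ), h * stdPDF h := by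
          rw [← intervalIntegral.integral_Iic_add_Ioi hmin_int.integrableOn hmin_int.integrableOn,
            hIoi, hIic, add_zero]
        rw [hs, E1, neg_zero, L1]
        ring
      have hp0 : stdPDF 0 ≤ 1/2 := by
        have h4 : (2:ℝ) ≤ Real.sqrt (2 * Real.pi) := by
          have h5 := Real.sqrt_le_sqrt (show (4:ℝ) ≤ 2 * Real.pi by nlinarith [Real.pi_gt_three])
          rwa [show Real.sqrt 4 = 2 by
            rw [show (4:ℝ) = 2^2 by norm_num, Real.sqrt_sq (by norm_num)]] at h5
        have : stdPDF 0 = 1 / Real.sqrt (2 * Real.pi) := by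
          unfold stdPDF; norm_num
        rw [this]
        rw [div_le_div_iff₀ (by linarith) (by norm_num)]
        linarith
      rw [hgval] at hcmp
      linarith
    · -- upper bound
      apply integral_nonpos
      intro h
      exact mul_nonpos_of_nonpos_of_nonneg (vfun_nonpos t ht h) (stdPDF_nonneg h)
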